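/- arXiv:1809.07897 — 3 statements merged into one kernel-verified Lean document; each statement's English description precedes it below -/
import Mathlib

section
/- The connected-components functor C : CSet_L → Set preserves finite products: C applied to the terminal classified set is a singleton, and for any classified sets X and Y the canonical map C(X × Y) → C(X) × C(Y) given by [(x, y)] ↦ ([x], [y]) is a bijection. -/
open CategoryTheory

universe u

/-- A classified set over a label set `L`: a carrier set with a reflexive
relation `rel ℓ` for every label `ℓ ∈ L`. -/
structure CSet (L : Type u) : Type (u + 1) where
  carrier : Type u
  rel : L → carrier → carrier → Prop
  refl : ∀ ℓ x, rel ℓ x x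

/-- A morphism of classified sets: a function on carriers preserving every relation. -/
structure CSetHom {L : Type u} (X Y : CSet L) : Type u where
  toFun : X.carrier → Y.carrier
  preserves : ∀ ℓ x y, X.rel ℓ x y → Y.rel ℓ (toFun x) (toFun y)

theorem CSetHom.ext {L : Type u} {X Y : CSet L} {f g : CSetHom X Y}
    (h : f.toFun = g.toFun) : f = g := by
  cases f; cases g; cases h; rfl

/-- The category of classified sets over `L`. -/
instance CSet.instCategory (L : Type u) : Category (CSet L) where
  Hom := CSetHom
  id _ := ⟨id, fun _ _ _ h => h⟩
  comp f g := ⟨g.toFun ∘ f.toFun, fun ℓ x y h => g.preserves ℓ _ _ (f.preserves ℓ x y h)⟩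
  id_comp _ := rfl
  comp_id _ := rfl
  assoc _ _ _ := rfl

variable {L : Type u}

/-- Two points of a classified set are connected if they are related at some level;
the equivalence closure of this relation (taken by `Quot`) is the least equivalence
relation `R*` containing the union of all the relations `R_ℓ`. -/
def CSet.connRel (X : CSet L) : X.carrier → X.carrier → Prop :=
  fun x y => ∃ ℓ, X.rel ℓ x y

/-- The set of connected components of a classified set. -/
def CSet.conn (X : CSet L) : Type u := Quot X.connRel

/-- The terminal classified set: one element, all relations total. -/
def CSet.term (L : Type u) : CSet L where
  carrier := PUnit
  rel _ _ _ := True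
  refl _ _ := trivial

/-- Binary product of classified sets: componentwise relations on the product carrier. -/
def CSet.prod (A B : CSet L) : CSet L where
  carrier := A.carrier × B.carrier
  rel ℓ p q := A.rel ℓ p.1 q.1 ∧ B.rel ℓ p.2 q.2
  refl ℓ p := ⟨A.refl ℓ p.1, B.refl ℓ p.2⟩

/-- The canonical comparison map `C (X × Y) → C X × C Y`, `[(x, y)] ↦ ([x], [y])`. -/
def CSet.canProd (X Y : CSet L) : (X.prod Y).conn → X.conn × Y.conn :=
  Quot.lift (fun p => (Quot.mk X.connRel p.1, Quot.mk Y.connRel p.2))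
    (fun p q h => by
      obtain ⟨ℓ, h1, h2⟩ := h
      exact Prod.ext_iff.mpr ⟨Quot.sound ⟨ℓ, h1⟩, Quot.sound ⟨ℓ, h2⟩⟩)

/-- The connected-components functor preserves finite products:
`C` of the terminal classified set is a singleton, and the canonical map
`C (X × Y) → C X × C Y`, `[(x, y)] ↦ ([x], [y])`, is a bijection. -/
theorem CSet.conn_preservesFiniteProducts (L : Type u) :
    (Nonempty (CSet.term L).conn ∧ ∀ a b : (CSet.term L).conn, a = b) ∧
    ∀ X Y : CSet L, Function.Bijective (CSet.canProd X Y) := by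
  refine ⟨⟨⟨Quot.mk _ PUnit.unit⟩, fun a b => ?_⟩, fun X Y => ?_⟩
  · induction a using Quot.ind
    induction b using Quot.ind
    rfl
  · let g : X.carrier → Y.conn → (X.prod Y).conn := fun x =>
      Quot.lift (fun y => Quot.mk _ (x, y))
        (fun y y' h => by
          obtain ⟨ℓ, h⟩ := h
          exact Quot.sound ⟨ℓ, X.refl ℓ x, h⟩)
    have gcongr : ∀ x x', X.connRel x x' → g x = g x' := by
      intro x x' ⟨ℓ, h⟩
      funext b
      induction b using Quot.ind with
      | _ y => exact Quot.sound ⟨ℓ, h, Y.refl ℓ y⟩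
    let inv : X.conn × Y.conn → (X.prod Y).conn := fun p =>
      Quot.lift g gcongr p.1 p.2
    apply Function.bijective_iff_has_inverse.mpr
    refine ⟨inv, fun p => ?_, fun p => ?_⟩
    · induction p using Quot.ind with
      | _ q => rfl
    · obtain ⟨a, b⟩ := p
      induction a using Quot.ind
      induction b using Quot.ind
      rfl
end

section
/- Classified sets protected at π form an exponential ideal: if B is a classified set over L protected at π, then for any classified set A over L the exponential B^A is protected at π. -/
open CategoryTheory

universe u

variable {L : Type u}

/-- The exponential `B^A`: carrier the morphisms `A ⟶ B`, with `f R_ℓ g` iff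
`f` and `g` send `R_ℓ`-related inputs to `R_ℓ`-related outputs. -/
def CSet.exp (A B : CSet L) : CSet L where
  carrier := CSetHom A B
  rel ℓ f g := ∀ a a', A.rel ℓ a a' → B.rel ℓ (f.toFun a) (g.toFun a')
  refl ℓ f := fun a a' h => f.preserves ℓ a a' h

/-- A classified set is protected at `π` if `R_ℓ` is the complete (always-true)
relation for every `ℓ ∈ π`. -/
def CSet.ProtectedAt (X : CSet L) (π : Set L) : Prop :=
  ∀ ℓ ∈ π, ∀ x y : X.carrier, X.rel ℓ x y

/-- Classified sets protected at `π` form an exponential ideal: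
if `B` is protected at `π`, then for any classified set `A` the exponential `B^A`
is protected at `π`. -/
theorem CSet.exp_protectedAt (L : Type u) (π : Set L) (A B : CSet L)
    (hB : B.ProtectedAt π) : (CSet.exp A B).ProtectedAt π := by
  intro ℓ hℓ f g a a' _
  exact hB ℓ hℓ _ _
end

section
/- Let π, π' ⊆ L with π − π' ≠ ∅, let A be a classified set over L with nonempty carrier, and let B be a classified set over L that is visible at π − π'. Then every morphism of classified sets ◆_π A → ◆_{π'} B is a constant function. -/
open CategoryTheory

universe u

/-- `□_π`: the endofunctor of `CSet L` that keeps the carrier, replaces `R_ℓ` by the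
diagonal (equality) relation for each `ℓ ∈ π`, keeps `R_ℓ` for `ℓ ∉ π`, and is the
identity on underlying functions. -/
def CSet.boxPi (L : Type u) (π : Set L) : CSet L ⥤ CSet L where
  obj X :=
    ⟨X.carrier,
     fun ℓ x y => (ℓ ∈ π ∧ x = y) ∨ (ℓ ∉ π ∧ X.rel ℓ x y),
     fun ℓ x => (Classical.em (ℓ ∈ π)).elim (fun h => Or.inl ⟨h, rfl⟩)
        (fun h => Or.inr ⟨h, X.refl ℓ x⟩)⟩
  map f :=
    ⟨f.toFun,
     fun ℓ x y h => h.elim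
        (fun hp => Or.inl ⟨hp.1, congrArg f.toFun hp.2⟩)
        (fun hr => Or.inr ⟨hr.1, f.preserves ℓ x y hr.2⟩)⟩
  map_id _ := rfl
  map_comp _ _ := rfl

/-- `◆_π`: the endofunctor of `CSet L` that keeps the carrier, replaces `R_ℓ` by the
complete (always-true) relation for each `ℓ ∈ π`, keeps `R_ℓ` for `ℓ ∉ π`, and is the
identity on underlying functions. -/
def CSet.diamondPi (L : Type u) (π : Set L) : CSet L ⥤ CSet L where
  obj X :=
    ⟨X.carrier,
     fun ℓ x y => ℓ ∈ π ∨ (ℓ ∉ π ∧ X.rel ℓ x y),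
     fun ℓ x => (Classical.em (ℓ ∈ π)).elim Or.inl (fun h => Or.inr ⟨h, X.refl ℓ x⟩)⟩
  map f :=
    ⟨f.toFun,
     fun ℓ x y h => h.imp id (fun hr => ⟨hr.1, f.preserves ℓ x y hr.2⟩)⟩
  map_id _ := rfl
  map_comp _ _ := rfl

/-- A classified set is visible at `σ` if `R_ℓ` is the diagonal (equality) relation
for every `ℓ ∈ σ`. -/
def CSet.VisibleAt {L : Type u} (X : CSet L) (σ : Set L) : Prop :=
  ∀ ℓ ∈ σ, ∀ x y : X.carrier, X.rel ℓ x y ↔ x = y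

/-- Let `π, π' ⊆ L` with `π − π' ≠ ∅`, let `A` be a classified set
over `L` with nonempty carrier, and let `B` be visible at `π − π'`. Then every
morphism of classified sets `◆_π A ⟶ ◆_{π'} B` is a constant function. -/
theorem CSet.diamondPi_noninterference (L : Type u) (π π' : Set L)
    (hππ' : (π \ π').Nonempty) (A B : CSet L) (hA : Nonempty A.carrier)
    (hB : B.VisibleAt (π \ π'))
    (f : (CSet.diamondPi L π).obj A ⟶ (CSet.diamondPi L π').obj B) :
    ∀ x y : A.carrier, f.toFun x = f.toFun y := by
  obtain ⟨ℓ, hℓπ, hℓπ'⟩ := hππ'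
  intro x y
  have h := f.preserves ℓ x y (Or.inl hℓπ)
  rcases h with h | ⟨_, hrel⟩
  · exact absurd h hℓπ'
  · exact (hB ℓ ⟨hℓπ, hℓπ'⟩ _ _).mp hrel
end
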